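/- Let T, N, B₁, B₂ : ℝ → ℝ⁴ be a Frenet frame of a pseudo null curve in E₁⁴ satisfying T' = N, N' = τB₁, B₁' = σN − τB₂, B₂' = −T − σB₁, with σ, τ smooth and τ nowhere zero. There exists a constant vector U with g(N(s), U) equal to a nonzero constant if and only if there exist constants a, b ∈ ℝ with σ(s)/τ(s) = −s²/2 + as + b for all s. -/

import Mathlib

noncomputable def g (v w : Fin 4 → ℝ) : ℝ :=
  -(v 0 * w 0) + v 1 * w 1 + v 2 * w 2 + v 3 * w 3

lemma g_symm (v w : Fin 4 → ℝ) : g v w = g w v := by simp [g]; ring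

lemma g_smul₁ (r : ℝ) (v w : Fin 4 → ℝ) : g (r • v) w = r * g v w := by
  simp [g]; ring

lemma g_sub₁ (v v' w : Fin 4 → ℝ) : g (v - v') w = g v w - g v' w := by
  simp [g]; ring

lemma g_neg₁ (v w : Fin 4 → ℝ) : g (-v) w = -g v w := by
  simp [g]; ring

lemma gU_deriv {X : ℝ → Fin 4 → ℝ} {v : Fin 4 → ℝ} (U : Fin 4 → ℝ) {s : ℝ}
    (h : HasDerivAt X v s) : HasDerivAt (fun t => g (X t) U) (g v U) s := by
  have hi : ∀ i, HasDerivAt (fun t => X t i) (v i) s := fun i => hasDerivAt_pi.mp h i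
  have := ((((hi 0).mul_const (U 0)).neg.add ((hi 1).mul_const (U 1))).add
      ((hi 2).mul_const (U 2))).add ((hi 3).mul_const (U 3))
  simpa [g, Pi.add_def, Pi.neg_def] using this

theorem stmt10
    (T N B₁ B₂ : ℝ → Fin 4 → ℝ) (σ τ : ℝ → ℝ)
    (hσ : ContDiff ℝ (⊤ : ℕ∞) σ) (hτ : ContDiff ℝ (⊤ : ℕ∞) τ)
    (hτ0 : ∀ s, τ s ≠ 0)
    (hT : ∀ s, HasDerivAt T (N s) s)
    (hN : ∀ s, HasDerivAt N (τ s • B₁ s) s)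
    (hB₁ : ∀ s, HasDerivAt B₁ (σ s • N s - τ s • B₂ s) s)
    (hB₂ : ∀ s, HasDerivAt B₂ (-T s - σ s • B₁ s) s)
    (hTT : ∀ s, g (T s) (T s) = 1) (hB₁B₁ : ∀ s, g (B₁ s) (B₁ s) = 1)
    (hNN : ∀ s, g (N s) (N s) = 0) (hB₂B₂ : ∀ s, g (B₂ s) (B₂ s) = 0)
    (hNB₂ : ∀ s, g (N s) (B₂ s) = 1)
    (hTN : ∀ s, g (T s) (N s) = 0) (hTB₁ : ∀ s, g (T s) (B₁ s) = 0)
    (hTB₂ : ∀ s, g (T s) (B₂ s) = 0) (hNB₁ : ∀ s, g (N s) (B₁ s) = 0)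
    (hB₁B₂ : ∀ s, g (B₁ s) (B₂ s) = 0)
    :
    (∃ U : Fin 4 → ℝ, ∃ c : ℝ, c ≠ 0 ∧ ∀ s, g (N s) U = c) ↔
    (∃ a b : ℝ, ∀ s, σ s / τ s = -(s ^ 2 / 2) + a * s + b) := by
  constructor
  · rintro ⟨U, c, hc, hU⟩
    have h3 : ∀ s, g (B₁ s) U = 0 := by
      intro s
      have hd : HasDerivAt (fun t => g (N t) U) (g (τ s • B₁ s) U) s := gU_deriv U (hN s)
      have hd0 : HasDerivAt (fun t => g (N t) U) 0 s := by
        have : (fun t => g (N t) U) = fun _ => c := funext hU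
        rw [this]; exact hasDerivAt_const s c
      have h0 := hd.unique hd0
      rw [g_smul₁] at h0
      exact (mul_eq_zero.mp h0).resolve_left (hτ0 s)
    have h4 : ∀ s, τ s * g (B₂ s) U = σ s * c := by
      intro s
      have hd : HasDerivAt (fun t => g (B₁ t) U) (g (σ s • N s - τ s • B₂ s) U) s :=
        gU_deriv U (hB₁ s)
      have hd0 : HasDerivAt (fun t => g (B₁ t) U) 0 s := by
        have : (fun t => g (B₁ t) U) = fun _ => 0 := funext h3
        rw [this]; exact hasDerivAt_const s 0
      have h0 := hd.unique hd0
      rw [g_sub₁, g_smul₁, g_smul₁, hU s] at h0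
      linarith
    set d := g (T 0) U with hd_def
    have h1 : ∀ s, g (T s) U = c * s + d := by
      have hk : ∀ s, HasDerivAt (fun t => g (T t) U - c * t) 0 s := by
        intro s
        have := (gU_deriv U (hT s)).sub ((hasDerivAt_id s).const_mul c)
        simpa [hU s, Pi.sub_def] using this
      intro s
      have := is_const_of_deriv_eq_zero (fun x => (hk x).differentiableAt)
        (fun x => (hk x).deriv) s 0
      simp at this
      linarith
    set e := g (B₂ 0) U with he_def
    have h4' : ∀ s, g (B₂ s) U = -(c * s ^ 2 / 2) - d * s + e := by
      have hk : ∀ s, HasDerivAt (fun t => g (B₂ t) U + (c / 2 * t ^ 2 + d * t)) 0 s := by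
        intro s
        have hp : HasDerivAt (fun t : ℝ => c / 2 * t ^ 2 + d * t) (c * s + d) s := by
          have h0 := ((hasDerivAt_pow 2 s).const_mul (c / 2)).add
            ((hasDerivAt_id s).const_mul d)
          replace h0 : HasDerivAt (fun i : ℝ => c / 2 * i ^ 2 + d * i) _ s := h0
          convert h0 using 1
          push_cast; ring
        have hq := (gU_deriv U (hB₂ s)).add hp
        have hval : g (-T s - σ s • B₁ s) U + (c * s + d) = 0 := by
          rw [g_sub₁, g_neg₁, g_smul₁, h1 s, h3 s]; ring
        rw [hval] at hq
        exact hq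
      intro s
      have := is_const_of_deriv_eq_zero (fun x => (hk x).differentiableAt)
        (fun x => (hk x).deriv) s 0
      simp at this
      linarith
    refine ⟨-d / c, e / c, fun s => ?_⟩
    have h4s := h4 s
    rw [h4' s] at h4s
    rw [div_eq_iff (hτ0 s)]
    have key : ((-(s ^ 2 / 2) + -d / c * s + e / c) * τ s) * c =
        τ s * (-(c * s ^ 2 / 2) - d * s + e) := by
      field_simp; ring
    refine mul_right_cancel₀ hc ?_
    rw [key]
    linarith [h4s]
  · rintro ⟨a, b, hab⟩
    set p : ℝ → ℝ := fun s => -(s ^ 2 / 2) + a * s + b with hp_def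
    set F : ℝ → Fin 4 → ℝ := fun s => (s - a) • T s + p s • N s + B₂ s with hF_def
    have hF : ∀ s, HasDerivAt F 0 s := by
      intro s
      have hsa : HasDerivAt (fun t : ℝ => t - a) 1 s := (hasDerivAt_id s).sub_const a
      have hps : HasDerivAt p (-s + a) s := by
        have h0 := (((hasDerivAt_pow 2 s).const_mul ((1:ℝ)/2)).neg.add
          ((hasDerivAt_id s).const_mul a)).add_const b
        have hfe : (fun x : ℝ => -(1 / 2 * x ^ 2) + a * id x + b) = p := by
          funext t; simp [hp_def]; ring
        replace h0 : HasDerivAt (fun x : ℝ => -(1 / 2 * x ^ 2) + a * id x + b) _ s := h0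
        rw [hfe] at h0
        convert h0 using 1
        push_cast; ring
      have h1' := hsa.smul (hT s)
      have h2' := hps.smul (hN s)
      have hsum := (h1'.add h2').add (hB₂ s)
      have hστ : p s * τ s = σ s := by
        have h := hab s
        rw [div_eq_iff (hτ0 s)] at h
        rw [hp_def]; linarith [h]
      have hzero : (s - a) • N s + (1 : ℝ) • T s + (p s • (τ s • B₁ s) + (-s + a) • N s) +
          (-T s - σ s • B₁ s) = 0 := by
        funext i
        simp only [Pi.add_apply, Pi.smul_apply, Pi.sub_apply, Pi.neg_apply, Pi.zero_apply,
          smul_eq_mul, one_smul]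
        linear_combination B₁ s i * hστ
      rw [hzero] at hsum
      exact hsum
    have hFc : ∀ s, F s = F 0 :=
      fun s => is_const_of_deriv_eq_zero (fun x => (hF x).differentiableAt)
        (fun x => (hF x).deriv) s 0
    refine ⟨F 0, 1, one_ne_zero, fun s => ?_⟩
    rw [← hFc s]
    have hNT : g (N s) (T s) = 0 := by rw [g_symm]; exact hTN s
    have expand : g (N s) (F s) =
        (s - a) * g (N s) (T s) + p s * g (N s) (N s) + g (N s) (B₂ s) := by
      simp only [hF_def, g, Pi.add_apply, Pi.smul_apply, smul_eq_mul]
      ring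
    rw [expand, hNT, hNN s, hNB₂ s]; ring
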